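/- arXiv:2309.02512 — 6 statements merged into one kernel-verified Lean document; each statement's English description precedes it below -/
import Mathlib

section
/- Let R be an integral domain, and let f, g ∈ R[X] be monic reciprocal polynomials of even degrees 2m and 2n respectively, with trace polynomials f^# and g^#. Then Res(f, g) = Res(f^#, g^#)². -/
open Polynomial


/-- The companion matrix of a polynomial `f` (with respect to its `natDegree`):
1's on the subdiagonal, last column `(-a_0, …, -a_{m-1})ᵀ`. -/
noncomputable def companion {R : Type*} [CommRing R] (f : R[X]) :
    Matrix (Fin f.natDegree) (Fin f.natDegree) R := fun i j =>
  (if (i : ℕ) = (j : ℕ) + 1 then 1 else 0) +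
  (if (j : ℕ) + 1 = f.natDegree then -f.coeff i else 0)

/-- The resultant `Res(f,g) = det (g (C_f))`. -/
noncomputable def Res {R : Type*} [CommRing R] (f g : R[X]) : R :=
  (Polynomial.aeval (companion f) g).det


/-- A polynomial is reciprocal if its top coefficient is nonzero and its
coefficients read the same backwards and forwards. -/
def IsReciprocal {R : Type*} [CommRing R] (g : R[X]) : Prop :=
  g.coeff g.natDegree ≠ 0 ∧ ∀ k ≤ g.natDegree, g.coeff k = g.coeff (g.natDegree - k)


/-- `h` is a trace polynomial of `g` (of even degree `2m`):
`deg h ≤ m` and `g(X) = X^m · h(X + 1/X)`, encoded polynomially. -/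
def IsTracePoly {R : Type*} [CommRing R] (g h : R[X]) (m : ℕ) : Prop :=
  h.natDegree ≤ m ∧
    g = ∑ k ∈ Finset.range (m + 1), Polynomial.C (h.coeff k) * X ^ (m - k) * (X ^ 2 + 1) ^ k

lemma det_charlike {R : Type*} [CommRing R] (d : ℕ) (a : ℕ → R) (x : R) :
    (Matrix.det (Matrix.of fun i j : Fin d =>
      (if i = j then x else 0) -
      ((if (i : ℕ) = (j : ℕ) + 1 then (1:R) else 0) +
       (if (j : ℕ) + 1 = d then -(a i) else 0)))) =
    x ^ d + ∑ i ∈ Finset.range d, a i * x ^ i := by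
  induction d generalizing a with
  | zero => simp [Matrix.det_fin_zero]
  | succ d ih =>
    rw [Matrix.det_succ_row_zero]
    have hrow : ∀ j : Fin (d+1), (Matrix.of fun i j : Fin (d+1) =>
        (if i = j then x else 0) -
        ((if (i : ℕ) = (j : ℕ) + 1 then (1:R) else 0) +
         (if (j : ℕ) + 1 = d + 1 then -(a i) else 0))) 0 j =
        (if (j : ℕ) = 0 then x else 0) + (if (j : ℕ) = d then a 0 else 0) := by
      intro j
      have c2 : ¬(((0 : Fin (d+1)) : ℕ) = (j : ℕ) + 1) := by simp
      simp only [Matrix.of_apply]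
      by_cases h1 : (0 : Fin (d+1)) = j
      · have hj0 : (j : ℕ) = 0 := by rw [← h1]; rfl
        by_cases h3 : (j : ℕ) = d
        · rw [if_pos h1, if_neg c2, if_pos (by omega : (j:ℕ)+1 = d+1), if_pos hj0,
            if_pos h3]; simp only [Fin.val_zero]; ring
        · rw [if_pos h1, if_neg c2, if_neg (by omega : ¬((j:ℕ)+1 = d+1)), if_pos hj0,
            if_neg h3]; simp
      · have hj0 : ¬((j : ℕ) = 0) := by
          intro h; exact h1 (Fin.ext (by simp [h]))
        by_cases h3 : (j : ℕ) = d
        · rw [if_neg h1, if_neg c2, if_pos (by omega : (j:ℕ)+1 = d+1), if_neg hj0,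
            if_pos h3]; simp
        · rw [if_neg h1, if_neg c2, if_neg (by omega : ¬((j:ℕ)+1 = d+1)), if_neg hj0,
            if_neg h3]; simp
    simp only [hrow]
    have key : ∀ j : Fin (d+1),
        (-1:R) ^ (j:ℕ) * ((if (j : ℕ) = 0 then x else 0) + (if (j : ℕ) = d then a 0 else 0)) *
          (((Matrix.of fun i j : Fin (d+1) =>
            (if i = j then x else 0) -
            ((if (i : ℕ) = (j : ℕ) + 1 then (1:R) else 0) +
             (if (j : ℕ) + 1 = d + 1 then -(a i) else 0)))).submatrix Fin.succ j.succAbove).det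
        = (if (j : ℕ) = 0 then x else 0) *
          (((Matrix.of fun i j : Fin (d+1) =>
            (if i = j then x else 0) -
            ((if (i : ℕ) = (j : ℕ) + 1 then (1:R) else 0) +
             (if (j : ℕ) + 1 = d + 1 then -(a i) else 0)))).submatrix Fin.succ j.succAbove).det
        + (-1:R) ^ (j:ℕ) * (if (j : ℕ) = d then a 0 else 0) *
          (((Matrix.of fun i j : Fin (d+1) =>
            (if i = j then x else 0) -
            ((if (i : ℕ) = (j : ℕ) + 1 then (1:R) else 0) +
             (if (j : ℕ) + 1 = d + 1 then -(a i) else 0)))).submatrix Fin.succ j.succAbove).det := by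
      intro j
      by_cases hj : (j:ℕ) = 0
      · rw [hj]; ring
      · rw [if_neg hj]; ring
    simp only [key, Finset.sum_add_distrib]
    have sum1 : (∑ j : Fin (d+1), (if (j : ℕ) = 0 then x else 0) *
          (((Matrix.of fun i j : Fin (d+1) =>
            (if i = j then x else 0) -
            ((if (i : ℕ) = (j : ℕ) + 1 then (1:R) else 0) +
             (if (j : ℕ) + 1 = d + 1 then -(a i) else 0)))).submatrix Fin.succ j.succAbove).det)
        = x * (x ^ d + ∑ i ∈ Finset.range d, a (i+1) * x ^ i) := by
      rw [Finset.sum_eq_single (0 : Fin (d+1))]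
      · rw [if_pos (show ((0:Fin (d+1)):ℕ) = 0 from rfl)]
        congr 1
        rw [← ih (fun i => a (i+1))]
        congr 1
        ext i j
        simp [Fin.succAbove_zero, Fin.succ_inj, Fin.val_succ, add_left_inj]
      · intro b _ hb
        rw [if_neg (by intro h; exact hb (Fin.ext (by simp [h]))), zero_mul]
      · intro h; exact absurd (Finset.mem_univ _) h
    have sum2 : (∑ j : Fin (d+1), (-1:R) ^ (j:ℕ) * (if (j : ℕ) = d then a 0 else 0) *
          (((Matrix.of fun i j : Fin (d+1) =>
            (if i = j then x else 0) -
            ((if (i : ℕ) = (j : ℕ) + 1 then (1:R) else 0) +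
             (if (j : ℕ) + 1 = d + 1 then -(a i) else 0)))).submatrix Fin.succ j.succAbove).det)
        = a 0 := by
      rw [Finset.sum_eq_single (Fin.last d)]
      · have hdet : (((Matrix.of fun i j : Fin (d+1) =>
            (if i = j then x else 0) -
            ((if (i : ℕ) = (j : ℕ) + 1 then (1:R) else 0) +
             (if (j : ℕ) + 1 = d + 1 then -(a i) else 0)))).submatrix Fin.succ
              (Fin.last d).succAbove).det = (-1:R) ^ d := by
          rw [Fin.succAbove_last]
          have htri : ((Matrix.of fun i j : Fin (d+1) =>
              (if i = j then x else 0) -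
              ((if (i : ℕ) = (j : ℕ) + 1 then (1:R) else 0) +
               (if (j : ℕ) + 1 = d + 1 then -(a i) else 0))).submatrix Fin.succ
                Fin.castSucc).BlockTriangular id := by
            intro i j hij
            have hij' : (j:ℕ) < (i:ℕ) := hij
            have e1 : i.succ ≠ j.castSucc :=
              Fin.ne_of_val_ne (by simp only [Fin.val_succ, Fin.coe_castSucc]; omega)
            have e2 : ¬((i:ℕ) + 1 = (j:ℕ) + 1) := by omega
            have e3 : ¬((j:ℕ) + 1 = d + 1) := by omega
            simp only [Matrix.submatrix_apply, Matrix.of_apply, Fin.val_succ,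
              Fin.coe_castSucc]
            rw [if_neg e1, if_neg e2, if_neg e3]; ring
          rw [Matrix.det_of_upperTriangular htri]
          have hdiag : ∀ i : Fin d, ((Matrix.of fun i j : Fin (d+1) =>
              (if i = j then x else 0) -
              ((if (i : ℕ) = (j : ℕ) + 1 then (1:R) else 0) +
               (if (j : ℕ) + 1 = d + 1 then -(a i) else 0))).submatrix Fin.succ
                Fin.castSucc) i i = -1 := by
            intro i
            have e1 : i.succ ≠ i.castSucc :=
              Fin.ne_of_val_ne (by simp only [Fin.val_succ, Fin.coe_castSucc]; omega)
            have h3 : ¬((i:ℕ) + 1 = d + 1) := by omega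
            simp only [Matrix.submatrix_apply, Matrix.of_apply, Fin.val_succ,
              Fin.coe_castSucc]
            rw [if_neg e1, if_neg h3]; simp
          rw [Finset.prod_congr rfl (fun i _ => hdiag i), Finset.prod_const]
          simp
        rw [hdet, Fin.val_last, if_pos rfl]
        rw [mul_assoc, mul_comm (a 0), ← mul_assoc, ← pow_add]
        have : Even (d + d) := ⟨d, rfl⟩
        rw [this.neg_one_pow, one_mul]
      · intro b _ hb
        rw [if_neg (by simpa [Fin.ext_iff] using hb), mul_zero, zero_mul]
      · intro h; exact absurd (Finset.mem_univ _) h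
    rw [sum1, sum2, Finset.sum_range_succ' (fun i => a i * x ^ i) d]
    rw [mul_add, Finset.mul_sum]
    simp only [pow_succ, pow_zero]
    ring_nf

lemma det_smul_one_sub_companion {R : Type*} [CommRing R] (f : R[X]) (hf : f.Monic)
    (x : R) : (x • (1 : Matrix (Fin f.natDegree) (Fin f.natDegree) R) - companion f).det
      = f.eval x := by
  have h := det_charlike f.natDegree (fun i => f.coeff i) x
  have hm : (x • (1 : Matrix (Fin f.natDegree) (Fin f.natDegree) R) - companion f)
      = Matrix.of fun i j : Fin f.natDegree =>
        (if i = j then x else 0) -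
        ((if (i : ℕ) = (j : ℕ) + 1 then (1:R) else 0) +
         (if (j : ℕ) + 1 = f.natDegree then -(f.coeff i) else 0)) := by
    ext i j
    simp [companion, Matrix.one_apply, mul_ite, ite_and]
  rw [hm, h]
  rw [eval_eq_sum_range, Finset.sum_range_succ, hf.coeff_natDegree, one_mul, add_comm]

lemma det_aeval_companion_linear {R : Type*} [CommRing R] (f : R[X]) (hf : f.Monic)
    (β : R) : (Polynomial.aeval (companion f) (X - C β)).det
      = (-1) ^ f.natDegree * f.eval β := by
  rw [map_sub, aeval_X, aeval_C, Algebra.algebraMap_eq_smul_one,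
    show companion f - β • 1 = -(β • 1 - companion f) from (neg_sub _ _).symm, Matrix.det_neg,
    det_smul_one_sub_companion f hf β]
  simp

lemma det_aeval_companion_list {R : Type*} [CommRing R] (f : R[X]) (hf : f.Monic)
    (l : List R) :
    (Polynomial.aeval (companion f) ((l.map (fun β => X - C β)).prod)).det
      = (-1) ^ (f.natDegree * l.length) * (l.map (fun β => f.eval β)).prod := by
  induction l with
  | nil => simp
  | cons β l ih =>
    rw [List.map_cons, List.prod_cons, map_mul, Matrix.det_mul,
      det_aeval_companion_linear f hf β, ih, List.map_cons, List.prod_cons,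
      List.length_cons]
    ring

noncomputable def trSum {R : Type*} [CommRing R] (n : ℕ) (h : R[X]) : R[X] :=
  ∑ k ∈ Finset.range (n + 1), C (h.coeff k) * X ^ (n - k) * (X ^ 2 + 1) ^ k

lemma trSum_mul_linear {R : Type*} [CommRing R] (n : ℕ) (γ : R) (p : R[X])
    (hp : p.natDegree ≤ n) :
    trSum (n + 1) ((X - C γ) * p) = (X ^ 2 - C γ * X + 1) * trSum n p := by
  unfold trSum
  have hc : ∀ k, ((X - C γ) * p).coeff k = (X * p).coeff k - γ * p.coeff k := by
    intro k
    rw [sub_mul, coeff_sub, coeff_C_mul]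
  have hsplit : ∀ k ∈ Finset.range (n + 1 + 1),
      C (((X - C γ) * p).coeff k) * X ^ (n + 1 - k) * (X ^ 2 + 1) ^ k
      = C ((X * p).coeff k) * X ^ (n + 1 - k) * (X ^ 2 + 1) ^ k
        - C γ * C (p.coeff k) * X ^ (n + 1 - k) * (X ^ 2 + 1) ^ k := by
    intro k _
    rw [hc, map_sub, sub_mul, sub_mul, map_mul]
  rw [Finset.sum_congr rfl hsplit, Finset.sum_sub_distrib]
  have h1 : (∑ k ∈ Finset.range (n + 1 + 1),
      C ((X * p).coeff k) * X ^ (n + 1 - k) * (X ^ 2 + 1) ^ k)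
      = (X ^ 2 + 1) * ∑ k ∈ Finset.range (n + 1),
          C (p.coeff k) * X ^ (n - k) * (X ^ 2 + 1) ^ k := by
    rw [Finset.sum_range_succ']
    have h0 : (X * p).coeff 0 = 0 := by
      rw [mul_comm, Polynomial.coeff_mul_X_zero]
    rw [h0, map_zero, zero_mul, zero_mul, add_zero, Finset.mul_sum]
    refine Finset.sum_congr rfl fun k hk => ?_
    have hk' : k ≤ n := by simpa [Nat.lt_succ_iff] using hk
    rw [mul_comm X p, Polynomial.coeff_mul_X, Nat.succ_sub_succ]
    ring
  have h2 : (∑ k ∈ Finset.range (n + 1 + 1),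
      C γ * C (p.coeff k) * X ^ (n + 1 - k) * (X ^ 2 + 1) ^ k)
      = (C γ * X) * ∑ k ∈ Finset.range (n + 1),
          C (p.coeff k) * X ^ (n - k) * (X ^ 2 + 1) ^ k := by
    rw [Finset.sum_range_succ]
    have hz : p.coeff (n + 1) = 0 :=
      Polynomial.coeff_eq_zero_of_natDegree_lt (by omega)
    rw [hz, map_zero, mul_zero, zero_mul, zero_mul, add_zero, Finset.mul_sum]
    refine Finset.sum_congr rfl fun k hk => ?_
    have hk' : k ≤ n := by simpa [Nat.lt_succ_iff] using hk
    have hx : (X : R[X]) ^ (n + 1 - k) = X * X ^ (n - k) := by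
      rw [← pow_succ']
      congr 1
      omega
    rw [hx]
    ring
  rw [h1, h2]
  ring

lemma trSum_multiset {R : Type*} [CommRing R] [Nontrivial R] (s : Multiset R) :
    trSum (Multiset.card s) ((s.map fun γ => X - C γ).prod)
      = (s.map fun γ => X ^ 2 - C γ * X + 1).prod := by
  induction s using Multiset.induction with
  | empty => simp [trSum]
  | cons γ s ih =>
    simp only [Multiset.map_cons, Multiset.prod_cons, Multiset.card_cons]
    have hdeg : ((s.map fun γ => X - C γ).prod : R[X]).natDegree ≤ Multiset.card s := by
      refine le_trans (Polynomial.natDegree_multiset_prod_le _) ?_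
      rw [Multiset.map_map]
      have : ∀ x ∈ s, (natDegree ∘ fun γ => (X : R[X]) - C γ) x = 1 := fun x _ => by
        simp [natDegree_X_sub_C]
      rw [Multiset.map_congr rfl this]
      simp
    rw [trSum_mul_linear _ γ _ hdeg, ih]

lemma trSum_eval {R : Type*} [CommRing R] (m : ℕ) (fs : R[X]) (hfs : fs.natDegree ≤ m)
    (γ a : R) (ha : a ^ 2 + 1 = a * γ) :
    (trSum m fs).eval a = a ^ m * fs.eval γ := by
  unfold trSum
  rw [Polynomial.eval_finset_sum]
  rw [eval_eq_sum_range' (lt_of_le_of_lt hfs (Nat.lt_succ_self m)) γ, Finset.mul_sum]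
  refine Finset.sum_congr rfl fun k hk => ?_
  have hk' : k ≤ m := by simpa [Nat.lt_succ_iff] using hk
  simp only [eval_mul, eval_pow, eval_C, eval_X, eval_add, eval_one]
  rw [ha, mul_pow]
  have : a ^ (m - k) * a ^ k = a ^ m := by
    rw [← pow_add]
    congr 1
    omega
  calc fs.coeff k * a ^ (m - k) * (a ^ k * γ ^ k)
      = fs.coeff k * (a ^ (m - k) * a ^ k) * γ ^ k := by ring
    _ = a ^ m * (fs.coeff k * γ ^ k) := by rw [this]; ring

lemma X_sq_add_one_monic {R : Type*} [CommRing R] [Nontrivial R] : ((X:R[X]) ^ 2 + 1).Monic := by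
  have : ((1:R[X])).degree < ((X:R[X]) ^ 2).degree := by
    rw [degree_one, degree_X_pow]
    exact_mod_cast Nat.zero_lt_two
  simpa using (monic_X_pow 2).add_of_left this

lemma X_sq_add_one_natDegree {R : Type*} [CommRing R] [Nontrivial R] :
    ((X:R[X]) ^ 2 + 1).natDegree = 2 := by
  have : ((1:R[X])).degree < ((X:R[X]) ^ 2).degree := by
    rw [degree_one, degree_X_pow]
    exact_mod_cast Nat.zero_lt_two
  rw [natDegree_add_eq_left_of_degree_lt this, natDegree_X_pow]

lemma trace_poly_monic {R : Type*} [CommRing R] [Nontrivial R] (f fs : R[X]) (m : ℕ)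
    (hf : f.Monic) (hfd : f.natDegree = 2 * m) (hdeg : fs.natDegree ≤ m)
    (heq : f = trSum m fs) : fs.Monic ∧ fs.natDegree = m := by
  have hq : ((X:R[X]) ^ 2 + 1).Monic := X_sq_add_one_monic
  have hcoeff : f.coeff (2 * m) = fs.coeff m := by
    rw [heq]
    unfold trSum
    rw [Polynomial.finset_sum_coeff, Finset.sum_range_succ]
    have hlast : (C (fs.coeff m) * X ^ (m - m) * ((X:R[X]) ^ 2 + 1) ^ m).coeff (2*m)
        = fs.coeff m := by
      rw [Nat.sub_self, pow_zero, mul_one]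
      rw [coeff_C_mul]
      have hmon : (((X:R[X]) ^ 2 + 1) ^ m).Monic := hq.pow m
      have hnd : (((X:R[X]) ^ 2 + 1) ^ m).natDegree = 2 * m := by
        rw [hq.natDegree_pow, X_sq_add_one_natDegree]; ring
      rw [show 2*m = (((X:R[X]) ^ 2 + 1) ^ m).natDegree from hnd.symm, hmon.coeff_natDegree,
        mul_one]
    rw [hlast]
    have hzero : ∀ k ∈ Finset.range m,
        (C (fs.coeff k) * X ^ (m - k) * ((X:R[X]) ^ 2 + 1) ^ k).coeff (2*m) = 0 := by
      intro k hk
      have hk' : k < m := Finset.mem_range.mp hk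
      apply Polynomial.coeff_eq_zero_of_natDegree_lt
      calc (C (fs.coeff k) * X ^ (m - k) * ((X:R[X]) ^ 2 + 1) ^ k).natDegree
          ≤ (C (fs.coeff k) * X ^ (m - k)).natDegree + (((X:R[X]) ^ 2 + 1) ^ k).natDegree :=
            natDegree_mul_le
        _ ≤ ((C (fs.coeff k)).natDegree + ((X:R[X]) ^ (m-k)).natDegree) + (((X:R[X]) ^ 2 + 1) ^ k).natDegree := by
            exact Nat.add_le_add_right natDegree_mul_le _
        _ ≤ (0 + (m - k)) + 2 * k := by
            refine add_le_add (add_le_add (le_of_eq (natDegree_C _)) (le_of_eq (natDegree_X_pow _))) ?_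
            rw [hq.natDegree_pow, X_sq_add_one_natDegree]; omega
        _ < 2 * m := by omega
    rw [Finset.sum_eq_zero hzero, zero_add]
  have h1 : fs.coeff m = 1 := by
    rw [← hcoeff, ← hfd, hf.coeff_natDegree]
  refine ⟨monic_of_natDegree_le_of_coeff_eq_one m hdeg h1, le_antisymm hdeg ?_⟩
  exact le_natDegree_of_ne_zero (h1 ▸ one_ne_zero)

lemma Res_map {R S : Type*} [CommRing R] [CommRing S] (φ : R →+* S) (f g : R[X])
    (hd : (f.map φ).natDegree = f.natDegree) :
    Res (f.map φ) (g.map φ) = φ (Res f g) := by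
  classical
  set e : Fin f.natDegree ≃ Fin (f.map φ).natDegree := finCongr hd.symm with he
  have hcomp : companion (f.map φ)
      = Matrix.reindex e e ((companion f).map φ) := by
    ext i j
    simp only [companion, Matrix.reindex_apply, Matrix.submatrix_apply, Matrix.map_apply,
      he, finCongr_symm, finCongr_apply, Fin.coe_cast, coeff_map, hd]
    rw [map_add, apply_ite φ, apply_ite φ, map_one, map_zero, map_neg]
  have step1 : Res (f.map φ) (g.map φ)
      = ((Polynomial.aeval ((companion f).map φ)) (g.map φ)).det := by
    rw [Res, hcomp, ← Matrix.reindexAlgEquiv_apply S]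
    rw [aeval_algHom_apply (Matrix.reindexAlgEquiv S S e) ((companion f).map φ) (g.map φ)]
    rw [Matrix.reindexAlgEquiv_apply, Matrix.det_reindex_self]
  rw [step1]
  have step2 : (Polynomial.aeval ((companion f).map φ)) (g.map φ)
      = φ.mapMatrix ((Polynomial.aeval (companion f)) g) := by
    rw [aeval_def, aeval_def, eval₂_map, hom_eval₂, RingHom.mapMatrix_apply]
    congr 1
    ext r i j
    simp [Matrix.algebraMap_matrix_apply, apply_ite φ]
  rw [step2, Res, ← RingHom.map_det]

lemma bind_pair_map_prod {α β M : Type*} [CommMonoid M] (A B : α → β) (h : β → M)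
    (l : List α) :
    ((l.flatMap fun γ => [A γ, B γ]).map h).prod = (l.map fun γ => h (A γ) * h (B γ)).prod := by
  induction l with
  | nil => simp
  | cons γ l ih => simp [ih, mul_assoc]

lemma map_sq_prod {α M : Type*} [CommMonoid M] (h : α → M) (l : List α) :
    (l.map fun γ => (h γ) ^ 2).prod = ((l.map h).prod) ^ 2 := by
  induction l with
  | nil => simp
  | cons γ l ih => simp [ih, mul_pow]

lemma multiset_prod_toList {α M : Type*} [CommMonoid M] (h : α → M) (s : Multiset α) :
    (s.map h).prod = (s.toList.map h).prod := by
  conv_lhs => rw [← Multiset.coe_toList s]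
  rw [Multiset.map_coe, Multiset.prod_coe]

lemma trSum_map {R S : Type*} [CommRing R] [CommRing S] (φ : R →+* S) (n : ℕ) (h : R[X]) :
    (trSum n h).map φ = trSum n (h.map φ) := by
  unfold trSum
  rw [Polynomial.map_sum]
  refine Finset.sum_congr rfl fun k _ => ?_
  rw [Polynomial.map_mul, Polynomial.map_mul, Polynomial.map_pow, Polynomial.map_pow,
    Polynomial.map_add, Polynomial.map_one, Polynomial.map_pow, Polynomial.map_C,
    Polynomial.map_X, coeff_map]

lemma exists_pair_root {K : Type*} [Field K] [IsAlgClosed K] (γ : K) :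
    ∃ a : K, a ^ 2 + 1 = a * γ := by
  have hdeg : ((X : K[X]) ^ 2 - C γ * X + 1).degree = 2 := by
    have h : (X : K[X]) ^ 2 - C γ * X + 1 = C 1 * X ^ 2 + C (-γ) * X + C 1 := by
      rw [map_one, one_mul, map_neg]; ring
    rw [h, degree_quadratic one_ne_zero]
  obtain ⟨r, hr⟩ := IsAlgClosed.exists_root ((X : K[X]) ^ 2 - C γ * X + 1)
    (by rw [hdeg]; norm_num)
  refine ⟨r, ?_⟩
  have hr' : r ^ 2 - γ * r + 1 = 0 := by
    simpa [IsRoot, eval_add, eval_sub, eval_mul, eval_pow] using hr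
  linear_combination hr'

/-- If `f, g` are monic reciprocal polynomials of even degree over an integral domain,
with trace polynomials `f♯, g♯`, then `Res(f,g) = Res(f♯,g♯)²`. -/
theorem res_eq_rec_sq {R : Type*} [CommRing R] [IsDomain R]
    (f g fs gs : R[X]) (m n : ℕ)
    (hf : f.Monic) (hg : g.Monic)
    (hfrec : IsReciprocal f) (hgrec : IsReciprocal g)
    (hfdeg : f.natDegree = 2 * m) (hgdeg : g.natDegree = 2 * n)
    (hfs : IsTracePoly f fs m) (hgs : IsTracePoly g gs n) :
    Res f g = (Res fs gs) ^ 2 := by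
  classical
  obtain ⟨hfs_deg, hfs_eq⟩ := hfs
  obtain ⟨hgs_deg, hgs_eq⟩ := hgs
  have hfst : f = trSum m fs := hfs_eq
  have hgst : g = trSum n gs := hgs_eq
  obtain ⟨hfsm, hfsd⟩ := trace_poly_monic f fs m hf hfdeg hfs_deg hfst
  obtain ⟨hgsm, hgsd⟩ := trace_poly_monic g gs n hg hgdeg hgs_deg hgst
  set K := AlgebraicClosure (FractionRing R) with hK
  let φ : R →+* K := (algebraMap (FractionRing R) K).comp (algebraMap R (FractionRing R))
  have hinj : Function.Injective φ :=
    (algebraMap (FractionRing R) K).injective.comp (IsFractionRing.injective R (FractionRing R))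
  apply hinj
  rw [map_pow, ← Res_map φ f g (by rw [hf.natDegree_map]),
    ← Res_map φ fs gs (by rw [hfsm.natDegree_map])]
  -- now over K
  have hFm : (f.map φ).Monic := hf.map φ
  have hFSm : (fs.map φ).Monic := hfsm.map φ
  have hGSm : (gs.map φ).Monic := hgsm.map φ
  have hFd : (f.map φ).natDegree = 2 * m := by rw [hf.natDegree_map, hfdeg]
  have hFSd : (fs.map φ).natDegree = m := by rw [hfsm.natDegree_map, hfsd]
  have hGSd : (gs.map φ).natDegree = n := by rw [hgsm.natDegree_map, hgsd]
  have hFeq : f.map φ = trSum m (fs.map φ) := by rw [hfst, trSum_map]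
  have hGeq : g.map φ = trSum n (gs.map φ) := by rw [hgst, trSum_map]
  -- split GS into roots
  have hsp : ((gs.map φ)).Splits := IsAlgClosed.splits (gs.map φ)
  have hGS1 : gs.map φ = ((gs.map φ).roots.map fun γ => X - C γ).prod :=
    hsp.eq_prod_roots_of_monic hGSm
  have hcard : Multiset.card (gs.map φ).roots = n := by
    rw [splits_iff_card_roots.mp hsp, hGSd]
  set L := (gs.map φ).roots.toList with hL
  have hGS2 : gs.map φ = (L.map fun γ => X - C γ).prod := by
    rw [hGS1, multiset_prod_toList]
  have hGfact : g.map φ = (L.map fun γ => X ^ 2 - C γ * X + 1).prod := by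
    rw [hGeq, ← multiset_prod_toList, ← trSum_multiset, hcard, ← hGS1]
  -- choose the paired roots
  choose A hA using fun γ : K => exists_pair_root γ
  set B : K → K := fun γ => γ - A γ with hBdef
  have hAB : ∀ γ : K, A γ * B γ = 1 := by
    intro γ; simp only [hBdef]; linear_combination -(hA γ)
  have hB : ∀ γ : K, (B γ) ^ 2 + 1 = B γ * γ := by
    intro γ; simp only [hBdef]; linear_combination hA γ
  have hquad : ∀ γ : K, ((X : K[X]) ^ 2 - C γ * X + 1)
      = (X - C (A γ)) * (X - C (B γ)) := by
    intro γ
    have h1 : A γ + B γ = γ := by simp only [hBdef]; ring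
    have h2 : A γ * B γ = 1 := hAB γ
    calc (X : K[X]) ^ 2 - C γ * X + 1
        = X ^ 2 - C (A γ + B γ) * X + C (A γ * B γ) := by rw [h1, h2, map_one]
      _ = (X - C (A γ)) * (X - C (B γ)) := by rw [C_add, C_mul]; ring
  -- per-root evaluation
  have heval : ∀ γ : K, (f.map φ).eval (A γ) * (f.map φ).eval (B γ)
      = ((fs.map φ).eval γ) ^ 2 := by
    intro γ
    rw [hFeq, trSum_eval m (fs.map φ) (le_of_eq hFSd) γ (A γ) (hA γ),
      trSum_eval m (fs.map φ) (le_of_eq hFSd) γ (B γ) (hB γ)]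
    calc A γ ^ m * eval γ (fs.map φ) * (B γ ^ m * eval γ (fs.map φ))
        = (A γ * B γ) ^ m * (eval γ (fs.map φ)) ^ 2 := by rw [mul_pow]; ring
      _ = (eval γ (fs.map φ)) ^ 2 := by rw [hAB, one_pow, one_mul]
  -- compute Res (f.map φ) (g.map φ)
  have hRFG : Res (f.map φ) (g.map φ) = ((L.map fun γ => (fs.map φ).eval γ).prod) ^ 2 := by
    rw [Res, hGfact]
    have e1 : (L.map fun γ => (X : K[X]) ^ 2 - C γ * X + 1).prod
        = ((L.flatMap fun γ => [A γ, B γ]).map fun β => X - C β).prod := by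
      rw [bind_pair_map_prod]
      congr 1
      exact List.map_congr_left fun γ _ => hquad γ
    rw [e1, det_aeval_companion_list (f.map φ) hFm]
    have hsign : ((-1 : K)) ^ ((f.map φ).natDegree * (L.flatMap fun γ => [A γ, B γ]).length)
        = 1 := by
      rw [hFd]
      exact Even.neg_one_pow ⟨m * (L.flatMap fun γ => [A γ, B γ]).length, by ring⟩
    rw [hsign, one_mul, bind_pair_map_prod A B (fun β => (f.map φ).eval β) L,
      List.map_congr_left fun γ _ => heval γ, map_sq_prod]
  -- compute Res (fs.map φ) (gs.map φ)
  have hRFS : (Res (fs.map φ) (gs.map φ)) ^ 2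
      = ((L.map fun γ => (fs.map φ).eval γ).prod) ^ 2 := by
    rw [Res, hGS2, det_aeval_companion_list (fs.map φ) hFSm, mul_pow]
    have hsign : (((-1 : K)) ^ ((fs.map φ).natDegree * L.length)) ^ 2 = 1 := by
      rw [← pow_mul, mul_comm _ 2, pow_mul]
      norm_num
    rw [hsign, one_mul]
  rw [hRFG, hRFS]
end

section
/- If m and n are relatively prime positive integers, then Res(g_m, g_n) = 1. -/
open Polynomial


/-- `g_n = 1 + X + ⋯ + X^(n-1) = (X^n - 1)/(X - 1)`. -/
noncomputable def gpoly (n : ℕ) : ℤ[X] := ∑ k ∈ Finset.range n, X ^ k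

namespace ResGpolyAux

open Matrix

lemma gpoly_coeff (a k : ℕ) : (gpoly a).coeff k = if k < a then 1 else 0 := by
  rw [gpoly, finset_sum_coeff]
  simp only [coeff_X_pow]
  rw [Finset.sum_ite_eq]
  simp [Finset.mem_range]

lemma gpoly_natDegree (a : ℕ) (ha : 0 < a) : (gpoly a).natDegree = a - 1 := by
  apply le_antisymm
  · apply natDegree_sum_le_of_forall_le
    intro i hi
    simp only [natDegree_X_pow]
    have := Finset.mem_range.mp hi
    omega
  · apply le_natDegree_of_ne_zero
    rw [gpoly_coeff]
    have : a - 1 < a := by omega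
    simp [this]

/-- abbreviation for the size of the companion matrix -/
noncomputable abbrev dd (m : ℕ) : ℕ := (gpoly m).natDegree

noncomputable def A (m : ℕ) : Matrix (Fin (dd m)) (Fin (dd m)) ℤ := companion (gpoly m)

/-- standard basis vectors (zero for out-of-range index) -/
def e (m : ℕ) (k : ℕ) : Fin (dd m) → ℤ := fun i => if (i : ℕ) = k then 1 else 0

/-- the all-ones vector -/
def u (m : ℕ) : Fin (dd m) → ℤ := fun _ => 1

noncomputable def v (m k : ℕ) : Fin (dd m) → ℤ := (A m ^ k) *ᵥ e m 0

noncomputable def S (m a : ℕ) : Matrix (Fin (dd m)) (Fin (dd m)) ℤ :=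
  ∑ k ∈ Finset.range a, A m ^ k

lemma hsum_mulVec {d : ℕ} {ι : Type*} (s : Finset ι) (M : ι → Matrix (Fin d) (Fin d) ℤ)
    (w : Fin d → ℤ) : (∑ k ∈ s, M k) *ᵥ w = ∑ k ∈ s, M k *ᵥ w := by
  induction s using Finset.cons_induction with
  | empty => simp [Matrix.zero_mulVec]
  | cons a s ha ih => simp [Finset.sum_cons, Matrix.add_mulVec, ih]

lemma hmulVec_sum {d : ℕ} {ι : Type*} (s : Finset ι) (M : Matrix (Fin d) (Fin d) ℤ)
    (w : ι → Fin d → ℤ) : M *ᵥ (∑ k ∈ s, w k) = ∑ k ∈ s, M *ᵥ w k := by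
  induction s using Finset.cons_induction with
  | empty => simp [Matrix.mulVec_zero]
  | cons a s ha ih => simp [Finset.sum_cons, Matrix.mulVec_add, ih]

section Basic

variable {m : ℕ} (hm2 : 2 ≤ m)

lemma hdd (hm : 0 < m) : dd m = m - 1 := gpoly_natDegree m hm

include hm2

lemma hd0 : 0 < dd m := by rw [hdd (by omega)]; omega

lemma hA (i j : Fin (dd m)) :
    A m i j = (if (i : ℕ) = (j : ℕ) + 1 then 1 else 0) +
      (if (j : ℕ) + 1 = dd m then -1 else 0) := by
  have hi : (i : ℕ) < m := by
    have h1 := i.isLt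
    have h2 := hdd (show 0 < m by omega)
    omega
  simp [A, companion, gpoly_coeff, hi]

/-- column extraction -/
lemma hMe (M : Matrix (Fin (dd m)) (Fin (dd m)) ℤ) (k : ℕ) (hk : k < dd m) (i : Fin (dd m)) :
    (M *ᵥ e m k) i = M i ⟨k, hk⟩ := by
  simp only [Matrix.mulVec, dotProduct, e]
  rw [Finset.sum_eq_single (⟨k, hk⟩ : Fin (dd m))]
  · simp
  · intro b _ hb
    have hbk : (b : ℕ) ≠ k := fun h => hb (Fin.ext h)
    simp [hbk]
  · simp

lemma hext (M N : Matrix (Fin (dd m)) (Fin (dd m)) ℤ)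
    (h : ∀ k, k < dd m → M *ᵥ e m k = N *ᵥ e m k) : M = N := by
  ext i j
  have h2 := congrFun (h j j.isLt) i
  rw [hMe hm2 M j j.isLt, hMe hm2 N j j.isLt] at h2
  simpa using h2

lemma hAv (w : Fin (dd m) → ℤ) (i : Fin (dd m)) :
    (A m *ᵥ w) i = (if 0 < (i : ℕ) then w ⟨(i : ℕ) - 1, by omega⟩ else 0)
      - w ⟨dd m - 1, by have := hd0 hm2; omega⟩ := by
  simp only [Matrix.mulVec, dotProduct, hA hm2, add_mul, ite_mul, one_mul, zero_mul,
    neg_one_mul]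
  rw [Finset.sum_add_distrib]
  congr 1
  · by_cases h : 0 < (i : ℕ)
    · rw [if_pos h, Finset.sum_eq_single (⟨(i : ℕ) - 1, by omega⟩ : Fin (dd m))]
      · simp only []
        have : (i : ℕ) = ((⟨(i : ℕ) - 1, by omega⟩ : Fin (dd m)) : ℕ) + 1 := by simp; omega
        rw [if_pos this]
      · intro b _ hb
        have hbk : (i : ℕ) ≠ (b : ℕ) + 1 := by
          intro hh
          exact hb (Fin.ext (by simp; omega))
        simp [hbk]
      · simp
    · rw [if_neg h]
      apply Finset.sum_eq_zero
      intro b _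
      have hbk : (i : ℕ) ≠ (b : ℕ) + 1 := by omega
      simp [hbk]
  · rw [Finset.sum_eq_single (⟨dd m - 1, by have := hd0 hm2; omega⟩ : Fin (dd m))]
    · have h1 : ((⟨dd m - 1, by have := hd0 hm2; omega⟩ : Fin (dd m)) : ℕ) + 1 = dd m := by
        simp; have := hd0 hm2; omega
      rw [if_pos h1]
    · intro b _ hb
      have hbk : ¬ ((b : ℕ) + 1 = dd m) := by
        intro hh
        exact hb (Fin.ext (by simp; omega))
      simp [hbk]
    · simp

lemma hAe (k : ℕ) (hk : k + 1 < dd m) : A m *ᵥ e m k = e m (k + 1) := by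
  funext i
  rw [hAv hm2]
  simp only [e]
  split_ifs <;> first | rfl | omega

lemma hAe' : A m *ᵥ e m (dd m - 1) = -u m := by
  funext i
  rw [hAv hm2]
  have hd := hd0 hm2
  simp only [e, u, Pi.neg_apply]
  split_ifs <;> first | rfl | omega

lemma hAu : A m *ᵥ u m = -e m 0 := by
  funext i
  rw [hAv hm2]
  simp only [e, u, Pi.neg_apply]
  split_ifs <;> first | rfl | omega

lemma hv0 : v m 0 = e m 0 := by simp [v]

lemma hvsucc (k : ℕ) : v m (k + 1) = A m *ᵥ v m k := by
  simp only [v]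
  rw [Matrix.mulVec_mulVec, ← pow_succ']

lemma hve (k : ℕ) (hk : k < dd m) : v m k = e m k := by
  induction k with
  | zero => exact hv0 hm2
  | succ k ih =>
    rw [hvsucc hm2, ih (by omega), hAe hm2 k hk]

lemma hvd : v m (dd m) = -u m := by
  have h : dd m - 1 + 1 = dd m := by have := hd0 hm2; omega
  calc v m (dd m) = v m (dd m - 1 + 1) := by rw [h]
    _ = A m *ᵥ v m (dd m - 1) := hvsucc hm2 _
    _ = A m *ᵥ e m (dd m - 1) := by rw [hve hm2 _ (by have := hd0 hm2; omega)]
    _ = -u m := hAe' hm2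

lemma hsum_e : ∑ k ∈ Finset.range (dd m), e m k = u m := by
  funext i
  rw [Finset.sum_apply]
  simp only [e, u]
  rw [Finset.sum_ite_eq]
  simp [i.isLt]

lemma hsum_v : ∑ k ∈ Finset.range m, v m k = 0 := by
  have hm' : m = dd m + 1 := by rw [hdd (by omega : 0 < m)]; omega
  rw [show Finset.range m = Finset.range (dd m + 1) from by rw [← hm'], Finset.sum_range_succ]
  rw [Finset.sum_congr rfl (fun k hk => hve hm2 k (Finset.mem_range.mp hk))]
  rw [hsum_e hm2, hvd hm2]
  simp

lemma haeval (a : ℕ) : aeval (A m) (gpoly a) = S m a := by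
  simp [gpoly, S, map_sum, map_pow]

lemma hSv (a : ℕ) : S m a *ᵥ e m 0 = ∑ k ∈ Finset.range a, v m k := by
  simp only [S, v]
  rw [hsum_mulVec]

lemma hScomm (a k : ℕ) : S m a * A m ^ k = A m ^ k * S m a := by
  simp only [S, Finset.sum_mul, Finset.mul_sum, ← pow_add]
  apply Finset.sum_congr rfl
  intro i _
  rw [add_comm]

lemma hSm : S m m = 0 := by
  apply hext hm2
  intro k hk
  rw [← hve hm2 k hk]
  simp only [v, Matrix.mulVec_mulVec]
  rw [hScomm hm2, ← Matrix.mulVec_mulVec, hSv hm2, hsum_v hm2]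
  simp [Matrix.mulVec_zero, Matrix.zero_mulVec]

lemma hAm : A m ^ m = 1 := by
  have h := geom_sum_mul (A m) m
  have h2 : (∑ i ∈ Finset.range m, A m ^ i) = S m m := rfl
  rw [h2, hSm hm2, zero_mul] at h
  have h3 := h.symm
  rwa [sub_eq_zero] at h3

lemma hpowmod (a : ℕ) : A m ^ a = A m ^ (a % m) := by
  conv_lhs => rw [← Nat.div_add_mod a m]
  rw [pow_add, pow_mul, hAm hm2, one_pow, one_mul]

lemma hvmod (a : ℕ) : v m a = v m (a % m) := by
  simp only [v]
  rw [hpowmod hm2]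

end Basic

section Perm

variable {m n : ℕ} (hm2 : 2 ≤ m) {n' km : ℕ} (hinv : n * n' = m * km + 1)

noncomputable def P (m n : ℕ) : Matrix (Fin (dd m)) (Fin (dd m)) ℤ :=
  Matrix.of fun i j => v m (n * (j : ℕ)) i

include hm2 hinv

lemma hmodinv (t : ℕ) (ht : t < m) : n' * (n * t % m) % m = t := by
  have h1 : n' * (n * t % m) % m = n' * (n * t) % m :=
    Nat.ModEq.mul_left n' (Nat.mod_modEq (n * t) m)
  have h2 : n' * (n * t) = t + m * (km * t) := by
    rw [show n' * (n * t) = n * n' * t by ring, hinv]; ring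
  rw [h1, h2, Nat.add_mul_mod_self_left, Nat.mod_eq_of_lt ht]

lemma hsum_vn : ∑ t ∈ Finset.range m, v m (n * t) = 0 := by
  have key : ∑ t ∈ Finset.range m, v m (n * t) = ∑ j ∈ Finset.range m, v m j := by
    rw [Finset.sum_congr rfl (fun t _ => hvmod hm2 (n * t))]
    apply Finset.sum_nbij' (i := fun t => n * t % m) (j := fun t => n' * t % m)
    · intro a _; exact Finset.mem_range.mpr (Nat.mod_lt _ (by omega))
    · intro a _; exact Finset.mem_range.mpr (Nat.mod_lt _ (by omega))
    · intro a ha; exact hmodinv hm2 hinv a (Finset.mem_range.mp ha)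
    · intro a ha
      exact hmodinv hm2 (show n' * n = m * km + 1 by rw [mul_comm]; exact hinv) a
        (Finset.mem_range.mp ha)
    · intro a _; rfl
  rw [key, hsum_v hm2]

lemma hPe (k : ℕ) (hk : k < dd m) : P m n *ᵥ e m k = v m (n * k) := by
  funext i
  rw [hMe hm2 _ k hk]
  rfl

lemma hPu : P m n *ᵥ u m = - v m (n * dd m) := by
  have hm' : m = dd m + 1 := by rw [hdd (by omega : 0 < m)]; omega
  have h1 : P m n *ᵥ u m = ∑ k ∈ Finset.range (dd m), v m (n * k) := by
    rw [← hsum_e hm2, hmulVec_sum]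
    exact Finset.sum_congr rfl (fun k hk => hPe hm2 hinv k (Finset.mem_range.mp hk))
  have h2 := hsum_vn hm2 hinv
  rw [show Finset.range m = Finset.range (dd m + 1) from by rw [← hm'],
    Finset.sum_range_succ] at h2
  rw [h1]
  exact eq_neg_of_add_eq_zero_left h2

lemma hPA : P m n * A m = A m ^ n * P m n := by
  apply hext hm2
  intro k hk
  rw [← Matrix.mulVec_mulVec, ← Matrix.mulVec_mulVec, hPe hm2 hinv k hk]
  have hR : A m ^ n *ᵥ v m (n * k) = v m (n * (k + 1)) := by
    simp only [v]
    rw [Matrix.mulVec_mulVec, ← pow_add, show n + n * k = n * (k + 1) by ring]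
  rw [hR]
  by_cases hk1 : k + 1 < dd m
  · rw [hAe hm2 k hk1, hPe hm2 hinv (k + 1) hk1]
  · have hd := hd0 hm2
    have hkeq : k = dd m - 1 := by omega
    have hdx : dd m - 1 + 1 = dd m := by omega
    subst hkeq
    rw [hdx, hAe' hm2, Matrix.mulVec_neg, hPu hm2 hinv, neg_neg]

lemma hPpow (t : ℕ) : P m n * A m ^ t = A m ^ (n * t) * P m n := by
  induction t with
  | zero => simp
  | succ t ih =>
    rw [pow_succ, ← mul_assoc, ih, mul_assoc, hPA hm2 hinv, ← mul_assoc, ← pow_add,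
      show n * t + n = n * (t + 1) by ring]

lemma hPv (t : ℕ) : P m n *ᵥ v m t = v m (n * t) := by
  have h0 : P m n *ᵥ e m 0 = e m 0 := by
    have := hPe hm2 hinv 0 (hd0 hm2)
    rwa [mul_zero, hv0 hm2] at this
  conv_lhs => rw [v]
  rw [Matrix.mulVec_mulVec, hPpow hm2 hinv, ← Matrix.mulVec_mulVec, h0]
  rfl

lemma hPP' : P m n * P m n' = 1 := by
  apply hext hm2
  intro k hk
  rw [← Matrix.mulVec_mulVec,
    hPe hm2 (show n' * n = m * km + 1 by rw [mul_comm]; exact hinv) k hk,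
    hPv hm2 hinv]
  have hkm : k < m := by have h := hdd (show 0 < m by omega); omega
  have h2 : n * (n' * k) = k + m * (km * k) := by
    rw [show n * (n' * k) = n * n' * k by ring, hinv]; ring
  rw [hvmod hm2, h2, Nat.add_mul_mod_self_left, Nat.mod_eq_of_lt hkm, hve hm2 k hk,
    Matrix.one_mulVec]

end Perm

end ResGpolyAux

open ResGpolyAux in
/-- If `m` and `n` are relatively prime positive integers, then `Res(g_m, g_n) = 1`. -/
theorem res_gpoly_coprime (m n : ℕ) (hm : 0 < m) (hn : 0 < n)
    (hcop : Nat.gcd m n = 1) : Res (gpoly m) (gpoly n) = 1 := by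
  rcases Nat.lt_or_ge m 2 with h1 | hm2
  · -- m = 1 : the matrices are 0 × 0
    have hm1 : m = 1 := by omega
    subst hm1
    have hd : (gpoly 1).natDegree = 0 := gpoly_natDegree 1 (by omega)
    haveI : IsEmpty (Fin ((gpoly 1).natDegree)) := by rw [hd]; infer_instance
    unfold Res
    exact Matrix.det_isEmpty
  · -- main case
    have hco : Nat.Coprime n m := Nat.Coprime.symm hcop
    obtain ⟨n', -, hn'⟩ := Nat.exists_mul_mod_eq_one_of_coprime hco (by omega)
    have hdm := Nat.div_add_mod (n * n') m
    rw [hn'] at hdm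
    have hinv : n * n' = m * (n * n' / m) + 1 := by omega
    -- determinant identities
    have hdetP : (P m n).det * (P m n').det = 1 := by
      rw [← Matrix.det_mul, hPP' hm2 hinv, Matrix.det_one]
    have hconj : (A m ^ n - 1) * P m n = P m n * (A m - 1) := by
      rw [sub_mul, mul_sub, one_mul, mul_one, hPA hm2 hinv]
    have hdet1 : (A m ^ n - 1).det = (A m - 1).det := by
      have h := congrArg Matrix.det hconj
      rw [Matrix.det_mul, Matrix.det_mul] at h
      linear_combination (P m n').det * h + ((A m - 1).det - (A m ^ n - 1).det) * hdetP
    have hgeom : S m n * (A m - 1) = A m ^ n - 1 := geom_sum_mul (A m) n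
    have hdetS : (S m n).det * (A m - 1).det = (A m - 1).det := by
      have h := congrArg Matrix.det hgeom
      rw [Matrix.det_mul] at h
      rw [h, hdet1]
    -- nonvanishing of det (A - 1) via the derivative trick
    have hpoly : gpoly m * (X - 1 : ℤ[X]) = X ^ m - 1 := geom_sum_mul X m
    have hder : derivative (gpoly m) * (X - 1) + gpoly m
        = Polynomial.C (m : ℤ) * X ^ (m - 1) := by
      have h := congrArg derivative hpoly
      simp only [derivative_mul, derivative_sub, derivative_one, derivative_X,
        derivative_X_pow, mul_one, sub_zero] at h
      simpa using h
    have hkey : aeval (A m) (derivative (gpoly m)) * (A m - 1) + 0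
        = (m : ℤ) • A m ^ (m - 1) := by
      have h := congrArg (fun p => aeval (A m) p) hder
      simp only [map_add, map_mul, map_sub, map_pow, aeval_X, aeval_C, map_one] at h
      rw [haeval hm2, hSm hm2] at h
      rw [h, Algebra.smul_def]
    rw [add_zero] at hkey
    have hdetA : (A m).det ^ m = 1 := by
      rw [← Matrix.det_pow, hAm hm2, Matrix.det_one]
    have hdetAne : (A m).det ≠ 0 := by
      intro h0
      rw [h0, zero_pow (by omega : m ≠ 0)] at hdetA
      exact zero_ne_one hdetA
    have hAd1 : (A m - 1).det ≠ 0 := by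
      intro h0
      have h := congrArg Matrix.det hkey
      rw [Matrix.det_mul, h0, mul_zero, Matrix.det_smul, Matrix.det_pow] at h
      have hne : ((m : ℤ)) ^ (Fintype.card (Fin (dd m))) * (A m).det ^ (m - 1) ≠ 0 :=
        mul_ne_zero (pow_ne_zero _ (by exact_mod_cast (by omega : m ≠ 0))) (pow_ne_zero _ hdetAne)
      exact hne h.symm
    have hfin : (S m n).det = 1 := mul_right_cancel₀ hAd1 (by rw [hdetS, one_mul])
    unfold Res
    have hcomp : companion (gpoly m) = A m := rfl
    rw [hcomp, haeval hm2 n]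
    exact hfin
end

section
/- Let n be an odd positive integer and let h ∈ ℤ[X] be a trace polynomial of g_n. Then h(0) = 1 if n ≡ 1 or 3 (mod 8), and h(0) = −1 if n ≡ 5 or 7 (mod 8). -/
open Polynomial
open Zsqrtd


/-- If `n` is an odd positive integer and `h` is a trace polynomial of `g_n`, then
`h(0) = 1` if `n ≡ 1, 3 (mod 8)` and `h(0) = −1` if `n ≡ 5, 7 (mod 8)`. -/
theorem trace_eval_zero (n : ℕ) (hn : 0 < n) (hodd : Odd n) (h : ℤ[X])
    (hh : IsTracePoly (gpoly n) h ((n - 1) / 2)) :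
    (n % 8 = 1 ∨ n % 8 = 3 → h.eval 0 = 1) ∧
    (n % 8 = 5 ∨ n % 8 = 7 → h.eval 0 = -1) := by
  obtain ⟨hdeg, heq⟩ := hh
  set m := (n - 1) / 2 with hm
  set c := h.eval 0 with hc
  have hi2 : (sqrtd : GaussianInt) ^ 2 = -1 := by
    rw [sq, Zsqrtd.dmuld]; rfl
  have hi4 : (sqrtd : GaussianInt) ^ 4 = 1 := by
    rw [show (4:ℕ) = 2*2 from rfl, pow_mul, hi2]; ring
  have hi3 : (sqrtd : GaussianInt) ^ 3 = -sqrtd := by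
    rw [pow_succ, hi2]; ring
  have hine : (sqrtd : GaussianInt) ≠ 0 := by
    intro hcon; have := congrArg Zsqrtd.im hcon; simp at this
  have hione : (sqrtd : GaussianInt) ≠ 1 := by
    intro hcon; have := congrArg Zsqrtd.im hcon; simp at this
  have key : ((c : GaussianInt)) * sqrtd ^ m * (sqrtd - 1) = sqrtd ^ n - 1 := by
    have h1 : (aeval (sqrtd : GaussianInt)) (gpoly n) = ∑ k ∈ Finset.range n, sqrtd ^ k := by
      simp [gpoly]
    have h2 : (aeval (sqrtd : GaussianInt)) (gpoly n) = (c : GaussianInt) * sqrtd ^ m := by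
      rw [heq, map_sum, Finset.sum_eq_single 0]
      · simp [hc, ← Polynomial.coeff_zero_eq_eval_zero]
      · intro k hk hk0
        have : ((sqrtd : GaussianInt) ^ 2 + 1) = 0 := by rw [hi2]; ring
        simp [this, zero_pow hk0]
      · intro habs; simp at habs
    have h3 := geom_sum_mul (sqrtd : GaussianInt) n
    rw [← h1, h2] at h3
    exact h3
  have cancel : ∀ e : ℤ, (c : GaussianInt) * sqrtd ^ m * (sqrtd - 1)
      = (e : GaussianInt) * sqrtd ^ m * (sqrtd - 1) → c = e := by
    intro e he
    have hne : (sqrtd : GaussianInt) ^ m * (sqrtd - 1) ≠ 0 :=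
      mul_ne_zero (pow_ne_zero _ hine) (sub_ne_zero.mpr hione)
    have : (c : GaussianInt) = e := by
      apply mul_right_cancel₀ hne
      rw [← mul_assoc, ← mul_assoc]; exact he
    exact_mod_cast this
  have pown : ∀ t r : ℕ, (sqrtd : GaussianInt) ^ (8 * t + r) = sqrtd ^ r := by
    intro t r
    rw [pow_add, show 8 * t = 4 * (2 * t) from by ring, pow_mul, hi4, one_pow, one_mul]
  have powm : ∀ t s : ℕ, (sqrtd : GaussianInt) ^ (4 * t + s) = sqrtd ^ s := by
    intro t s
    rw [pow_add, pow_mul, hi4, one_pow, one_mul]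
  constructor
  · rintro (h1 | h3')
    · obtain ⟨t, ht⟩ : ∃ t, n = 8 * t + 1 := ⟨n / 8, by omega⟩
      have hmt : m = 4 * t + 0 := by omega
      apply cancel 1
      rw [key, ht, hmt, pown, powm]
      push_cast; ring
    · obtain ⟨t, ht⟩ : ∃ t, n = 8 * t + 3 := ⟨n / 8, by omega⟩
      have hmt : m = 4 * t + 1 := by omega
      apply cancel 1
      rw [key, ht, hmt, pown, powm, hi3]
      push_cast; linear_combination -hi2
  · rintro (h5 | h7)
    · obtain ⟨t, ht⟩ : ∃ t, n = 8 * t + 5 := ⟨n / 8, by omega⟩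
      have hmt : m = 4 * t + 2 := by omega
      apply cancel (-1)
      rw [key, ht, hmt, pown, powm, hi2,
        show (5:ℕ) = 4 + 1 from rfl, pow_add, hi4]
      push_cast; ring
    · obtain ⟨t, ht⟩ : ∃ t, n = 8 * t + 7 := ⟨n / 8, by omega⟩
      have hmt : m = 4 * t + 3 := by omega
      apply cancel (-1)
      rw [key, ht, hmt, pown, powm, hi3,
        show (7:ℕ) = 4 + 3 from rfl, pow_add, hi4, hi3]
      push_cast; linear_combination -hi2
end

section
/- Let p be an odd prime and let g_p^# ∈ ℤ[X] be a trace polynomial of g_p. Then Res(X, g_p^#) equals the Legendre symbol (−2/p). (Note that X is a trace polynomial of the cyclotomic polynomial Φ₄ = X² + 1, so this says Rec(Φ₄, g_p) = (−2/p).) -/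
open Polynomial


/-- If `p` is an odd prime and `g_p♯` is a trace polynomial of `g_p`, then
`Res(X, g_p♯)` equals the Legendre symbol `(−2/p)`. -/
theorem rec_phi4_eq_legendre_neg_two (p : ℕ) [Fact p.Prime] (hp : p ≠ 2)
    (gps : ℤ[X]) (hgps : IsTracePoly (gpoly p) gps ((p - 1) / 2)) :
    Res (X : ℤ[X]) gps = legendreSym p (-2) := by
  obtain ⟨-, h2⟩ := hgps
  set m := (p - 1) / 2 with hm
  -- Step A : Res X gps = gps.coeff 0
  have hd : (X : ℤ[X]).natDegree = 1 := natDegree_X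
  have hres : Res (X : ℤ[X]) gps = gps.coeff 0 := by
    have hC : companion (X : ℤ[X]) = 0 := by
      funext i j
      have hi : (i : ℕ) = 0 := by have := i.isLt; omega
      have hj : (j : ℕ) = 0 := by have := j.isLt; omega
      simp [companion, hi, hj, hd, coeff_X_zero]
    rw [Res, hC, Polynomial.aeval_def, Polynomial.eval₂_at_zero,
      Algebra.algebraMap_eq_smul_one, Matrix.det_smul, Matrix.det_one]
    simp [hd]
  rw [hres]
  -- Step B : evaluate at i in ℤ[i]
  set I : GaussianInt := Zsqrtd.sqrtd with hI
  have hI2 : I ^ 2 = -1 := by rw [sq, Zsqrtd.dmuld]; norm_num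
  have hI4 : I ^ 4 = 1 := by
    have : I ^ 4 = (I ^ 2) ^ 2 := by ring
    rw [this, hI2]; ring
  have hIne : I - 1 ≠ 0 := by rw [hI]; decide
  have hL : aeval I (gpoly p) = ∑ k ∈ Finset.range p, I ^ k := by
    simp [gpoly]
  have hR : aeval I (∑ k ∈ Finset.range (m + 1),
      Polynomial.C (gps.coeff k) * X ^ (m - k) * (X ^ 2 + 1) ^ k)
      = ((gps.coeff 0 : ℤ) : GaussianInt) * I ^ m := by
    rw [map_sum, Finset.sum_eq_single 0]
    · simp [algebraMap_int_eq]
    · intro k _ hk0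
      have : I ^ 2 + 1 = 0 := by rw [hI2]; ring
      simp [this, zero_pow hk0]
    · simp
  have key : ∑ k ∈ Finset.range p, I ^ k = ((gps.coeff 0 : ℤ) : GaussianInt) * I ^ m := by
    rw [← hL, ← hR, h2]
  have geom : ((gps.coeff 0 : ℤ) : GaussianInt) * I ^ m * (I - 1) = I ^ p - 1 := by
    rw [← key, geom_sum_mul]
  set c : GaussianInt := ((gps.coeff 0 : ℤ) : GaussianInt) with hc
  -- arithmetic on p mod 8
  have hp1 : p % 2 = 1 := ((Fact.out : p.Prime).eq_two_or_odd).resolve_left hp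
  set s := p % 8 with hs
  set q := p / 8 with hq
  have hp8 : p = 8 * q + s := by omega
  have hso : s = 1 ∨ s = 3 ∨ s = 5 ∨ s = 7 := by omega
  have hple : legendreSym p (-2) = ZMod.χ₈' ((s : ℕ) : ZMod 8) := by
    rw [legendreSym.at_neg_two hp]
    congr 1
    rw [hp8]; push_cast
    have h8 : ((8 : ℕ) : ZMod 8) = 0 := by decide
    push_cast at h8
    rw [h8]; ring
  -- I^p = I^s
  have hI8 : I ^ 8 = 1 := by
    rw [show (8:ℕ) = 4*2 from rfl, pow_mul, hI4, one_pow]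
  have hIp : I ^ p = I ^ s := by
    rw [hp8, pow_add, pow_mul, hI8, one_pow, one_mul]
  -- I^m = I^((s-1)/2) since m = 4q + (s-1)/2
  have hmval : m = 4 * q + (s - 1) / 2 := by omega
  have hIm : I ^ m = I ^ ((s - 1) / 2) := by
    rw [hmval, pow_add, pow_mul, hI4, one_pow, one_mul]
  rw [hIm, hIp] at geom
  have hIne1 : I + 1 ≠ 0 := by rw [hI]; decide
  rcases hso with h | h | h | h <;> rw [h] at geom hple <;> norm_num at geom
  · -- s = 1
    have e : c * (I - 1) = 1 * (I - 1) := by linear_combination geom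
    have hc1' := mul_right_cancel₀ hIne e
    rw [hc] at hc1'
    have hc1 : gps.coeff 0 = 1 := by exact_mod_cast hc1'
    rw [hc1, hple]; decide
  · -- s = 3
    have e : c * (I + 1) = 1 * (I + 1) := by
      linear_combination -geom + (c - I) * hI2
    have hc1' := mul_right_cancel₀ hIne1 e
    rw [hc] at hc1'
    have hc1 : gps.coeff 0 = 1 := by exact_mod_cast hc1'
    rw [hc1, hple]; decide
  · -- s = 5
    have e : c * (I - 1) = -1 * (I - 1) := by
      linear_combination -geom + (c * I - c - I ^ 3 + I) * hI2
    have hc1' := mul_right_cancel₀ hIne e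
    rw [hc] at hc1'
    have hc1 : gps.coeff 0 = -1 := by exact_mod_cast hc1'
    rw [hc1, hple]; decide
  · -- s = 7
    have e : c * (I + 1) = -1 * (I + 1) := by
      linear_combination geom + (c * I - c * I ^ 2 + c + I ^ 5 - I ^ 3 + I) * hI2
    have hc1' := mul_right_cancel₀ hIne1 e
    rw [hc] at hc1'
    have hc1 : gps.coeff 0 = -1 := by exact_mod_cast hc1'
    rw [hc1, hple]; decide
end

section
/- Let R be a nontrivial commutative ring and let g ∈ R[X] be a reciprocal polynomial of even degree 2m. Then there exists a unique polynomial h ∈ R[X] with deg h ≤ m such that g = ∑_{k=0}^{m} (h.coeff k) · X^{m−k} · (X²+1)^k, and moreover this h has degree exactly m. -/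
open Polynomial



lemma expandPow {R : Type*} [CommRing R] (e k : ℕ) :
    (X:R[X])^e * (X^2+1)^k
      = ∑ i ∈ Finset.range (k+1), Polynomial.C ((k.choose i : R)) * X^(e+2*i) := by
  rw [add_pow, Finset.mul_sum]
  refine Finset.sum_congr rfl fun i hi => ?_
  rw [one_pow, mul_one, ← pow_mul,
    show ((k.choose i : ℕ) : R[X]) = Polynomial.C ((k.choose i : R)) from (Polynomial.C_eq_natCast _).symm,
    pow_add]
  ring

lemma coeffP_hi {R : Type*} [CommRing R] (m k t : ℕ) (hk : k ≤ m) :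
    ((X:R[X])^(m-k) * (X^2+1)^k).coeff (m+t)
      = if t ≤ k ∧ (t+k) % 2 = 0 then (k.choose ((t+k)/2) : R) else 0 := by
  rw [expandPow]
  simp only [finset_sum_coeff, coeff_C_mul, coeff_X_pow, mul_ite, mul_one, mul_zero]
  by_cases h : t ≤ k ∧ (t+k) % 2 = 0
  · rw [if_pos h]
    rw [Finset.sum_eq_single_of_mem ((t+k)/2) (Finset.mem_range.mpr (by omega))]
    · rw [if_pos (by omega)]
    · intro i hmem hi
      rw [if_neg (by simp at hmem; omega)]
  · rw [if_neg h]
    refine Finset.sum_eq_zero fun i hi => ?_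
    rw [if_neg (by simp at hi; omega)]

lemma coeffP_lo {R : Type*} [CommRing R] (m k t : ℕ) (hk : k ≤ m) (ht : t ≤ m) :
    ((X:R[X])^(m-k) * (X^2+1)^k).coeff (m-t)
      = if t ≤ k ∧ (t+k) % 2 = 0 then (k.choose ((t+k)/2) : R) else 0 := by
  rw [expandPow]
  simp only [finset_sum_coeff, coeff_C_mul, coeff_X_pow, mul_ite, mul_one, mul_zero]
  by_cases h : t ≤ k ∧ (t+k) % 2 = 0
  · rw [if_pos h]
    rw [Finset.sum_eq_single_of_mem ((k-t)/2) (Finset.mem_range.mpr (by omega))]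
    · rw [if_pos (by omega),
        show (k-t)/2 = k - (t+k)/2 by omega, Nat.choose_symm (by omega)]
    · intro i hmem hi
      rw [if_neg (by simp at hmem; omega)]
  · rw [if_neg h]
    refine Finset.sum_eq_zero fun i hi => ?_
    rw [if_neg (by simp at hi; omega)]

lemma coeffS_hi {R : Type*} [CommRing R] (m : ℕ) (c : ℕ → R) (t : ℕ) (ht : t ≤ m) :
    (∑ k ∈ Finset.range (m+1),
        Polynomial.C (c k) * X^(m-k) * (X^2+1)^k).coeff (m+t)
      = c t + ∑ k ∈ Finset.Ioc t m,
          c k * (if (t+k) % 2 = 0 then (k.choose ((t+k)/2) : R) else 0) := by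
  simp only [mul_assoc, finset_sum_coeff, coeff_C_mul]
  rw [← Finset.add_sum_erase _ _ (Finset.mem_range.mpr (by omega) : t ∈ Finset.range (m+1))]
  congr 1
  · rw [coeffP_hi m t t ht, if_pos ⟨le_refl t, by omega⟩, show (t+t)/2 = t by omega,
      Nat.choose_self]
    simp
  · have hsub : Finset.Ioc t m ⊆ (Finset.range (m+1)).erase t := by
      intro x hx
      simp only [Finset.mem_Ioc] at hx
      simp only [Finset.mem_erase, Finset.mem_range]
      omega
    refine ((Finset.sum_subset hsub ?_).symm.trans ?_)
    · intro x hx hx'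
      simp only [Finset.mem_erase, Finset.mem_range] at hx
      simp only [Finset.mem_Ioc] at hx'
      rw [coeffP_hi m x t (by omega), if_neg (by omega), mul_zero]
    · refine Finset.sum_congr rfl fun k hk => ?_
      simp only [Finset.mem_Ioc] at hk
      rw [coeffP_hi m k t (by omega)]
      congr 1
      by_cases hp : (t+k) % 2 = 0
      · rw [if_pos ⟨by omega, hp⟩, if_pos hp]
      · rw [if_neg (by omega), if_neg hp]

lemma exist_aux {R : Type*} [CommRing R] (m : ℕ) :
    ∀ j, ∀ G : R[X],
      (∀ t, t ≤ m → G.coeff (m+t) = G.coeff (m-t)) →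
      (∀ t, j ≤ t → G.coeff (m+t) = 0) →
      j ≤ m + 1 →
      ∃ h : R[X], h.natDegree ≤ m ∧ (∀ t, j ≤ t → h.coeff t = 0) ∧
        G = ∑ k ∈ Finset.range (m + 1),
              Polynomial.C (h.coeff k) * X ^ (m - k) * (X ^ 2 + 1) ^ k := by
  intro j
  induction j with
  | zero =>
    intro G hsym hvan _
    refine ⟨0, by simp, by simp, ?_⟩
    have hG : G = 0 := by
      ext n
      rcases le_or_gt n m with h | h
      · have h2 := hsym (m - n) (by omega)
        rw [show m - (m - n) = n by omega] at h2
        rw [coeff_zero, ← h2, hvan _ (by omega)]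
      · rw [show n = m + (n - m) by omega, hvan _ (by omega), coeff_zero]
    rw [hG]
    exact (Finset.sum_eq_zero fun k _ => by simp).symm
  | succ j ih =>
    intro G hsym hvan hj
    have hjm : j ≤ m := by omega
    set a := G.coeff (m + j) with ha
    have hPj : ((X:R[X]) ^ (m - j) * (X ^ 2 + 1) ^ j).coeff (m + j) = 1 := by
      rw [coeffP_hi m j j hjm, if_pos ⟨le_refl j, by omega⟩, show (j+j)/2 = j by omega,
        Nat.choose_self, Nat.cast_one]
    obtain ⟨h', hd', hv', heq'⟩ :=
      ih (G - Polynomial.C a * (X ^ (m - j) * (X ^ 2 + 1) ^ j))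
        (fun t ht => by
          simp only [coeff_sub, coeff_C_mul]
          rw [hsym t ht, coeffP_hi m j t hjm, coeffP_lo m j t hjm ht])
        (fun t ht => by
          simp only [coeff_sub, coeff_C_mul]
          rcases eq_or_lt_of_le ht with rfl | hlt
          · rw [hPj, mul_one, ← ha, sub_self]
          · rw [hvan t (by omega), coeffP_hi m j t hjm, if_neg (by omega), mul_zero,
              sub_zero])
        (by omega)
    refine ⟨h' + Polynomial.C a * X ^ j, ?_, ?_, ?_⟩
    · refine le_trans (natDegree_add_le _ _) (max_le hd' ?_)
      exact le_trans (natDegree_C_mul_X_pow_le a j) hjm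
    · intro t ht
      rw [coeff_add, hv' t (by omega), coeff_C_mul, coeff_X_pow, if_neg (by omega),
        mul_zero, add_zero]
    · have hsplit : ∀ k : ℕ, (h' + Polynomial.C a * X ^ j).coeff k
          = h'.coeff k + (if k = j then a else 0) := by
        intro k
        by_cases hk : k = j
        · subst hk; simp
        · simp [coeff_C_mul, coeff_X_pow, hk, Ne.symm hk]
      have hsum2 : ∑ k ∈ Finset.range (m + 1),
            Polynomial.C (if k = j then a else 0) * X ^ (m - k) * (X ^ 2 + 1) ^ k
          = Polynomial.C a * (X ^ (m - j) * (X ^ 2 + 1) ^ j) := by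
        rw [Finset.sum_eq_single_of_mem j (Finset.mem_range.mpr (by omega))
          (fun k _ hk => by rw [if_neg hk, map_zero, zero_mul, zero_mul]),
          if_pos rfl, mul_assoc]
      have key : ∑ k ∈ Finset.range (m + 1),
            Polynomial.C ((h' + Polynomial.C a * X ^ j).coeff k) * X ^ (m - k)
              * (X ^ 2 + 1) ^ k
          = (∑ k ∈ Finset.range (m + 1),
              Polynomial.C (h'.coeff k) * X ^ (m - k) * (X ^ 2 + 1) ^ k)
            + ∑ k ∈ Finset.range (m + 1),
              Polynomial.C (if k = j then a else 0) * X ^ (m - k) * (X ^ 2 + 1) ^ k := by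
        rw [← Finset.sum_add_distrib]
        refine Finset.sum_congr rfl fun k _ => ?_
        rw [hsplit k, map_add]
        ring
      rw [key, ← heq', hsum2]
      ring

theorem trace_poly_exists_unique' {R : Type*} [CommRing R] [Nontrivial R]
    (g : R[X]) (m : ℕ)
    (hrec : g.coeff g.natDegree ≠ 0 ∧ ∀ k ≤ g.natDegree, g.coeff k = g.coeff (g.natDegree - k))
    (hdeg : g.natDegree = 2 * m) :
    (∃! h : R[X], h.natDegree ≤ m ∧
        g = ∑ k ∈ Finset.range (m + 1),
          Polynomial.C (h.coeff k) * X ^ (m - k) * (X ^ 2 + 1) ^ k) ∧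
    ∀ h : R[X], (h.natDegree ≤ m ∧
        g = ∑ k ∈ Finset.range (m + 1),
          Polynomial.C (h.coeff k) * X ^ (m - k) * (X ^ 2 + 1) ^ k) →
      h.natDegree = m := by
  have hsymg : ∀ t, t ≤ m → g.coeff (m + t) = g.coeff (m - t) := by
    intro t ht
    have h2 := hrec.2 (m - t) (by omega)
    rw [hdeg, show 2 * m - (m - t) = m + t by omega] at h2
    exact h2.symm
  have hvang : ∀ t, m + 1 ≤ t → g.coeff (m + t) = 0 := fun t ht =>
    coeff_eq_zero_of_natDegree_lt (by omega)
  obtain ⟨h₀, hd₀, -, he₀⟩ := exist_aux m (m + 1) g hsymg hvang (le_refl _)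
  have step : ∀ h₁ h₂ : R[X],
      g = ∑ k ∈ Finset.range (m + 1),
            Polynomial.C (h₁.coeff k) * X ^ (m - k) * (X ^ 2 + 1) ^ k →
      g = ∑ k ∈ Finset.range (m + 1),
            Polynomial.C (h₂.coeff k) * X ^ (m - k) * (X ^ 2 + 1) ^ k →
      ∀ t, t ≤ m → (∀ k ∈ Finset.Ioc t m, h₁.coeff k = h₂.coeff k) →
      h₁.coeff t = h₂.coeff t := by
    intro h₁ h₂ e₁ e₂ t ht hk
    have c1 := coeffS_hi m h₁.coeff t ht
    have c2 := coeffS_hi m h₂.coeff t ht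
    rw [← e₁] at c1
    rw [← e₂] at c2
    have hsum : (∑ k ∈ Finset.Ioc t m,
          h₁.coeff k * (if (t+k) % 2 = 0 then (k.choose ((t+k)/2) : R) else 0))
        = ∑ k ∈ Finset.Ioc t m,
          h₂.coeff k * (if (t+k) % 2 = 0 then (k.choose ((t+k)/2) : R) else 0) :=
      Finset.sum_congr rfl fun k hkm => by rw [hk k hkm]
    have := c1.symm.trans c2
    rw [hsum] at this
    exact add_right_cancel this
  have huniq : ∀ h₁ h₂ : R[X],
      (h₁.natDegree ≤ m ∧ g = ∑ k ∈ Finset.range (m + 1),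
          Polynomial.C (h₁.coeff k) * X ^ (m - k) * (X ^ 2 + 1) ^ k) →
      (h₂.natDegree ≤ m ∧ g = ∑ k ∈ Finset.range (m + 1),
          Polynomial.C (h₂.coeff k) * X ^ (m - k) * (X ^ 2 + 1) ^ k) →
      h₁ = h₂ := by
    intro h₁ h₂ ⟨hd₁, e₁⟩ ⟨hd₂, e₂⟩
    have all : ∀ i, ∀ t, t ≤ m → m - t ≤ i → h₁.coeff t = h₂.coeff t := by
      intro i
      induction i with
      | zero =>
        intro t ht h0
        refine step h₁ h₂ e₁ e₂ t ht fun k hkm => ?_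
        simp only [Finset.mem_Ioc] at hkm
        omega
      | succ i ih =>
        intro t ht hle
        refine step h₁ h₂ e₁ e₂ t ht fun k hkm => ?_
        simp only [Finset.mem_Ioc] at hkm
        exact ih k hkm.2 (by omega)
    ext n
    rcases le_or_gt n m with h | h
    · exact all m n h (by omega)
    · rw [coeff_eq_zero_of_natDegree_lt (lt_of_le_of_lt hd₁ h),
        coeff_eq_zero_of_natDegree_lt (lt_of_le_of_lt hd₂ h)]
  have hdegree : ∀ h : R[X], (h.natDegree ≤ m ∧ g = ∑ k ∈ Finset.range (m + 1),
        Polynomial.C (h.coeff k) * X ^ (m - k) * (X ^ 2 + 1) ^ k) →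
      h.natDegree = m := by
    intro h ⟨hhd, hhe⟩
    have c1 := coeffS_hi m h.coeff m (le_refl m)
    rw [← hhe, Finset.Ioc_self, Finset.sum_empty, add_zero] at c1
    have hne : h.coeff m ≠ 0 := by
      rw [← c1, ← show 2 * m = m + m by ring, ← hdeg]
      exact hrec.1
    exact le_antisymm hhd (le_natDegree_of_ne_zero hne)
  exact ⟨⟨h₀, ⟨hd₀, he₀⟩, fun h hh => huniq h h₀ hh ⟨hd₀, he₀⟩⟩, hdegree⟩

/-- If `g` is a reciprocal polynomial of even degree `2m` over a nontrivial commutative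
ring, there is a unique polynomial `h` with `deg h ≤ m` such that
`g(X) = X^m · h(X + 1/X)`, and this `h` has degree exactly `m`. -/
theorem trace_poly_exists_unique {R : Type*} [CommRing R] [Nontrivial R]
    (g : R[X]) (m : ℕ) (hrec : IsReciprocal g) (hdeg : g.natDegree = 2 * m) :
    (∃! h : R[X], h.natDegree ≤ m ∧
        g = ∑ k ∈ Finset.range (m + 1),
          Polynomial.C (h.coeff k) * X ^ (m - k) * (X ^ 2 + 1) ^ k) ∧
    ∀ h : R[X], (h.natDegree ≤ m ∧
        g = ∑ k ∈ Finset.range (m + 1),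
          Polynomial.C (h.coeff k) * X ^ (m - k) * (X ^ 2 + 1) ^ k) →
      h.natDegree = m := by
  exact trace_poly_exists_unique' g m hrec hdeg
end

section
/- Define the Lucas polynomials L_n ∈ ℤ[X] by L₀ = 2, L₁ = X, and L_n = X·L_{n−1} + L_{n−2} for n ≥ 2. Then for every odd positive integer n there exists a polynomial H_n ∈ ℤ[X] such that L_n = X · H_n(X²), and if h ∈ ℤ[X] is a trace polynomial of g_n then h = H_n(X − 2). -/
open Polynomial


noncomputable def Luc : ℕ → ℤ[X]
  | 0 => 2
  | 1 => X
  | (n+2) => X * Luc (n+1) + Luc n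

lemma Luc_add_two (n : ℕ) : Luc (n+2) = X * Luc (n+1) + Luc n := rfl

noncomputable def evod : ℕ → ℤ[X] × ℤ[X]
  | 0 => (2, 1)
  | (j+1) => (X * (evod j).2 + (evod j).1, X * (evod j).2 + (evod j).1 + (evod j).2)

lemma luc_parity (j : ℕ) :
    Luc (2*j) = (evod j).1.comp (X^2) ∧ Luc (2*j+1) = X * (evod j).2.comp (X^2) := by
  induction j with
  | zero => simp [Luc, evod]
  | succ j ih =>
    obtain ⟨h1, h2⟩ := ih
    have e1 : 2*(j+1) = (2*j) + 2 := by ring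
    have key : Luc (2*(j+1)) = (evod (j+1)).1.comp (X^2) := by
      rw [e1, Luc_add_two, h1, h2, evod]
      simp only [add_comp, mul_comp, X_comp]
      ring
    refine ⟨key, ?_⟩
    have e2 : 2*(j+1)+1 = (2*j+1) + 2 := by ring
    rw [e2, Luc_add_two]
    have e3 : 2*j+1+1 = 2*(j+1) := by ring
    rw [e3, key, h2, evod]
    simp only [add_comp, mul_comp, X_comp]
    ring

lemma evod_deg (j : ℕ) : (evod j).1.natDegree ≤ j ∧ (evod j).2.natDegree ≤ j := by
  induction j with
  | zero => simp [evod]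
  | succ j ih =>
    obtain ⟨h1, h2⟩ := ih
    have hx : (X * (evod j).2 + (evod j).1).natDegree ≤ j + 1 := by
      refine (natDegree_add_le _ _).trans (max_le ?_ (h1.trans (by omega)))
      refine (natDegree_mul_le).trans ?_
      have : (X : ℤ[X]).natDegree = 1 := natDegree_X
      omega
    rw [evod]
    exact ⟨hx, (natDegree_add_le _ _).trans (max_le hx (h2.trans (by omega)))⟩

lemma trace_coeff_zero {m : ℕ} {h : ℤ[X]} (hd : h.natDegree ≤ m)
    (hz : (∑ k ∈ Finset.range (m + 1), C (h.coeff k) * X ^ (m - k) * (X ^ 2 + 1) ^ k) = 0) :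
    h = 0 := by
  by_contra hne
  set d := h.natDegree with hdd
  have : (∑ k ∈ Finset.range (m + 1),
      C (h.coeff k) * X ^ (m - k) * (X ^ 2 + 1) ^ k).coeff (m + d) = h.coeff d := by
    rw [finset_sum_coeff]
    rw [Finset.sum_eq_single d]
    · have hmd : m - d ≤ m + d := by omega
      rw [mul_assoc, mul_comm ((X:ℤ[X]) ^ (m-d)), ← mul_assoc, coeff_mul_X_pow',
        if_pos hmd, coeff_C_mul]
      have h2d : m + d - (m - d) = d * 2 := by omega
      rw [h2d]
      have hm : ((X:ℤ[X]) ^ 2 + 1).Monic := by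
        have := monic_X_pow_add_C (R := ℤ) (1:ℤ) (n := 2) (by norm_num)
        simpa using this
      have hc := (hm.pow d).coeff_natDegree
      have hnd : ((X:ℤ[X]) ^ 2 + 1).natDegree = 2 := by
        simpa using natDegree_X_pow_add_C (R := ℤ) (r := (1:ℤ)) (n := 2)
      rw [natDegree_pow, hnd] at hc
      rw [hc, mul_one]
    · intro k hk hkd
      have hk' : k ≤ m := by
        have := Finset.mem_range.mp hk; omega
      rcases lt_or_gt_of_ne hkd with hlt | hgt
      · have hmk : m - k ≤ m + d := by omega
        rw [mul_assoc, mul_comm ((X:ℤ[X]) ^ (m-k)), ← mul_assoc, coeff_mul_X_pow',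
          if_pos hmk, coeff_C_mul]
        have hdk : m + d - (m - k) = d + k := by omega
        rw [hdk]
        have hnd : (((X:ℤ[X]) ^ 2 + 1) ^ k).natDegree = k * 2 := by
          rw [natDegree_pow]
          have : ((X:ℤ[X]) ^ 2 + 1).natDegree = 2 := by
            simpa using natDegree_X_pow_add_C (R := ℤ) (r := (1:ℤ)) (n := 2)
          rw [this]
        have hz0 : ((((X:ℤ[X]) ^ 2 + 1) ^ k)).coeff (d + k) = 0 :=
          coeff_eq_zero_of_natDegree_lt (by rw [hnd]; omega)
        rw [hz0, mul_zero]
      · have hz0 : h.coeff k = 0 := coeff_eq_zero_of_natDegree_lt (by omega)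
        rw [hz0, map_zero, zero_mul, zero_mul, coeff_zero]
    · intro hd'
      exact absurd (Finset.mem_range.mpr (by omega)) hd'
  rw [hz, coeff_zero] at this
  exact hne (leadingCoeff_eq_zero.mp this.symm)

lemma trace_unique {m : ℕ} {g h1 h2 : ℤ[X]} (H1 : IsTracePoly g h1 m)
    (H2 : IsTracePoly g h2 m) : h1 = h2 := by
  obtain ⟨d1, e1⟩ := H1
  obtain ⟨d2, e2⟩ := H2
  have hd : (h1 - h2).natDegree ≤ m := (natDegree_sub_le _ _).trans (max_le d1 d2)
  have hz : (∑ k ∈ Finset.range (m + 1),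
      C ((h1-h2).coeff k) * X ^ (m - k) * (X ^ 2 + 1) ^ k) = 0 := by
    calc (∑ k ∈ Finset.range (m + 1), C ((h1-h2).coeff k) * X ^ (m - k) * (X ^ 2 + 1) ^ k)
        = (∑ k ∈ Finset.range (m + 1), C (h1.coeff k) * X ^ (m - k) * (X ^ 2 + 1) ^ k)
          - (∑ k ∈ Finset.range (m + 1), C (h2.coeff k) * X ^ (m - k) * (X ^ 2 + 1) ^ k) := by
          rw [← Finset.sum_sub_distrib]
          apply Finset.sum_congr rfl
          intro k _
          rw [coeff_sub, map_sub]; ring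
    _ = 0 := by rw [← e1, ← e2, sub_self]
  exact sub_eq_zero.mp (trace_coeff_zero hd hz)

section Field

abbrev K := RatFunc ℚ

noncomputable def tt : K := RatFunc.X

lemma tt_ne_zero : tt ≠ 0 := RatFunc.X_ne_zero

/-- evaluation of `Luc` at `t - t⁻¹`. -/
lemma aeval_luc (k : ℕ) : aeval (R := ℤ) (tt - tt⁻¹) (Luc k)
    = tt ^ k + (-1:K) ^ k * (tt⁻¹) ^ k := by
  induction k using Nat.twoStepInduction with
  | zero =>
    show aeval (R := ℤ) (tt - tt⁻¹) (Luc 0) = _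
    rw [show Luc 0 = (2:ℤ[X]) from rfl, map_ofNat]
    norm_num
  | one => simp [Luc]; ring
  | more k ih1 ih2 =>
    rw [Luc_add_two, map_add, map_mul, aeval_X, ih1, ih2]
    have ht : tt ≠ 0 := tt_ne_zero
    field_simp
    linear_combination (-(-1:K)^k * tt⁻¹^k * (tt + tt⁻¹)) * mul_inv_cancel₀ ht
end Field

lemma comp_X_sq_injective (p q : ℤ[X]) (h : p.comp (X^2) = q.comp (X^2)) : p = q := by
  have : (p - q).comp (X^2) = 0 := by rw [sub_comp, h, sub_self]
  rcases (comp_eq_zero_iff).mp this with h0 | ⟨_, hC⟩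
  · exact sub_eq_zero.mp h0
  · exfalso
    have := congrArg natDegree hC
    simp at this

/-- With the Lucas polynomials `L₀ = 2`, `L₁ = X`, `L_n = X·L_{n−1} + L_{n−2}`:
for every odd positive `n` there is `H_n ∈ ℤ[X]` with `L_n = X·H_n(X²)`, and any
trace polynomial `h` of `g_n` satisfies `h = H_n(X − 2)`. -/
theorem lucas_trace_poly (L : ℕ → ℤ[X]) (hL0 : L 0 = 2) (hL1 : L 1 = X)
    (hLrec : ∀ n : ℕ, 2 ≤ n → L n = X * L (n - 1) + L (n - 2)) :
    ∀ n : ℕ, 0 < n → Odd n → ∃ H : ℤ[X],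
      L n = X * H.comp (X ^ 2) ∧
      ∀ h : ℤ[X], IsTracePoly (gpoly n) h ((n - 1) / 2) → h = H.comp (X - C 2) := by
  have hLuc : ∀ k, L k = Luc k := by
    have key : ∀ k, L k = Luc k ∧ L (k+1) = Luc (k+1) := by
      intro k
      induction k with
      | zero => exact ⟨by rw [hL0]; rfl, by rw [hL1]; rfl⟩
      | succ k ih =>
        refine ⟨ih.2, ?_⟩
        have := hLrec (k+2) (by omega)
        have h1 : k + 2 - 1 = k + 1 := by omega
        have h2 : k + 2 - 2 = k := by omega
        rw [h1, h2] at this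
        show L (k+2) = Luc (k+2)
        rw [this, ih.1, ih.2, Luc_add_two]
    exact fun k => (key k).1
  rintro n hn ⟨m, hm⟩
  have hnm : n = 2*m + 1 := by omega
  subst hnm
  have hm2 : (2*m + 1 - 1)/2 = m := by omega
  rw [hm2]
  set H : ℤ[X] := (evod m).2 with hH
  refine ⟨H, ?_, ?_⟩
  · rw [hLuc]; exact (luc_parity m).2
  · intro h hh
    have hHdeg : H.natDegree ≤ m := (evod_deg m).2
    -- show H.comp (X - C 2) is itself a trace polynomial of gpoly (2m+1)
    have hT : IsTracePoly (gpoly (2*m+1)) (H.comp (X - C 2)) m := by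
      constructor
      · rw [natDegree_comp]
        have : (X - C (2:ℤ)).natDegree = 1 := natDegree_X_sub_C 2
        rw [this, mul_one]
        exact hHdeg
      · -- main identity, proved by injecting into RatFunc ℚ after comp with X^2
        set hc : ℤ[X] := H.comp (X - C 2) with hhc
        apply comp_X_sq_injective
        set ψ : ℤ[X] →ₐ[ℤ] K := aeval tt with hψ
        have ψinj : Function.Injective ψ := by
          intro a b hab
          have : ∀ p : ℤ[X], ψ p =
              algebraMap ℚ[X] K (p.map (Int.castRingHom ℚ)) := by
            intro p
            induction p using Polynomial.induction_on' with
            | add p q hp hq => simp [hp, hq]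
            | monomial i a =>
              simp only [← C_mul_X_pow_eq_monomial, Polynomial.map_mul, Polynomial.map_pow,
                Polynomial.map_C, Polynomial.map_X, map_mul, map_pow,
                RatFunc.algebraMap_X, RatFunc.algebraMap_C, hψ, aeval_C, aeval_X]
              have e0 : (RatFunc.X : K) = tt := rfl
              rw [e0]
              have e2 : RatFunc.C ((Int.castRingHom ℚ) a) = ((a : ℤ) : K) := by
                have := eq_intCast ((RatFunc.C).comp (Int.castRingHom ℚ)) a
                simp only [RingHom.coe_comp, Function.comp_apply] at this
                exact this
              rw [e2, eq_intCast]

          rw [this a, this b] at hab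
          have := RatFunc.algebraMap_injective (K := ℚ) hab
          exact Polynomial.map_injective _ Int.cast_injective this
        apply ψinj
        -- now a computation in the field K
        have ht : tt ≠ 0 := tt_ne_zero
        have htu : tt * (tt - tt⁻¹) = tt^2 - 1 := by field_simp
        have ht2 : (tt^2 - 1 : K) ≠ 0 := by
          have : (tt^2 - 1 : K) = ψ (X^2 - 1) := by
            simp [hψ]
          rw [this]
          intro h0
          have := ψinj (h0.trans (map_zero ψ).symm)
          have h1 := congrArg (fun p => Polynomial.coeff p 0) this
          simp at h1
        apply mul_left_cancel₀ ht2
        -- LHS : gpoly side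
        have hgL : (tt^2 - 1) * ψ ((gpoly (2*m+1)).comp (X^2)) = tt^(2*(2*m+1)) - 1 := by
          rw [aeval_comp]
          simp only [gpoly, map_sum, map_pow, aeval_X]
          have := geom_sum_mul (R := K) (aeval tt (X^2 : ℤ[X])) (2*m+1)
          simp only [map_pow, aeval_X] at this ⊢
          rw [mul_comm, this, ← pow_mul]
        -- RHS : trace sum side
        have hsum : ψ ((∑ k ∈ Finset.range (m + 1),
            C (hc.coeff k) * X ^ (m - k) * (X ^ 2 + 1) ^ k).comp (X^2))
            = tt^(2*m) * aeval (R := ℤ) (tt^2 + (tt⁻¹)^2) hc := by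
          have hv : ∀ k ∈ Finset.range (m+1),
              ψ ((C (hc.coeff k) * X ^ (m - k) * (X ^ 2 + 1) ^ k).comp (X^2))
              = tt^(2*m) * (algebraMap ℤ K (hc.coeff k) * (tt^2 + (tt⁻¹)^2)^k) := by
            intro k hk
            have hkm : k ≤ m := by have := Finset.mem_range.mp hk; omega
            simp only [mul_comp, C_comp, pow_comp, X_comp, add_comp, one_comp,
              map_mul, map_pow, map_add, map_one, aeval_C, aeval_X, hψ]
            have : ((tt^2)^2 + 1 : K) = tt^2 * (tt^2 + (tt⁻¹)^2) := by
              field_simp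
            rw [this, mul_pow]
            have hp : (tt:K)^(2*(m-k)) * (tt^2)^k = tt^(2*m) := by
              rw [← pow_mul, ← pow_add]
              congr 1
              omega
            rw [← hp]
            ring
          rw [sum_comp, map_sum, Finset.sum_congr rfl hv, ← Finset.mul_sum]
          congr 1
          have hdeg : hc.natDegree < m + 1 := by
            rw [hhc, natDegree_comp, natDegree_X_sub_C, mul_one]
            omega
          rw [aeval_eq_sum_range' hdeg]
          apply Finset.sum_congr rfl
          intro k _
          rw [Algebra.smul_def]
        -- connect to Luc via aeval at tt - tt⁻¹
        have hu2 : ((tt - tt⁻¹)^2 : K) = tt^2 + (tt⁻¹)^2 - 2 := by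
          field_simp; ring
        have hcomp : aeval (R := ℤ) (tt^2 + (tt⁻¹)^2) hc
            = aeval (R := ℤ) ((tt - tt⁻¹)^2) H := by
          rw [hhc, aeval_comp]
          have e8 : aeval (R := ℤ) (tt^2 + (tt⁻¹)^2) (X - C 2 : ℤ[X]) = (tt - tt⁻¹)^2 := by
            rw [map_sub, aeval_X, aeval_C, hu2]
            norm_num
          rw [e8]
        have hluc : (tt - tt⁻¹) * aeval (R := ℤ) ((tt - tt⁻¹)^2) H
            = tt^(2*m+1) - (tt⁻¹)^(2*m+1) := by
          have h1 : aeval (R := ℤ) (tt - tt⁻¹) (Luc (2*m+1))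
              = (tt - tt⁻¹) * aeval (R := ℤ) ((tt - tt⁻¹)^2) H := by
            rw [(luc_parity m).2, map_mul, aeval_X, aeval_comp]
            congr 2
            simp
          rw [← h1, aeval_luc]
          have : (-1:K)^(2*m+1) = -1 := by
            rw [pow_succ, pow_mul]; norm_num
          rw [this]; ring
        have final : tt ^ (2*(2*m+1)) - 1
            = tt * (tt - tt⁻¹) * (tt ^ (2*m) * aeval (R := ℤ) ((tt - tt⁻¹)^2) H) := by
          have expand : tt * (tt - tt⁻¹) * (tt ^ (2*m) * aeval (R := ℤ) ((tt - tt⁻¹)^2) H)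
              = tt * tt^(2*m) * ((tt - tt⁻¹) * aeval (R := ℤ) ((tt - tt⁻¹)^2) H) := by ring
          rw [expand, hluc]
          rw [show tt * tt^(2*m) = tt^(2*m+1) by rw [pow_succ]; ring]
          rw [mul_sub, ← pow_add, inv_pow, mul_inv_cancel₀ (pow_ne_zero _ ht)]
          have e9 : 2*(2*m+1) = (2*m+1) + (2*m+1) := by ring
          rw [e9]
        rw [hgL, hsum, hcomp, ← htu]
        exact final
    exact trace_unique hh hT
end
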